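/- arXiv:2104.01061 — 3 statements merged into one kernel-verified Lean document; each statement's English description precedes it below -/
import Mathlib

section
/- Let X be a finite set, Θ ⊆ ℝ^n open, and θ ↦ p_θ a continuously differentiable family of strictly positive probability distributions on X. Fix α > 0 and assume the n×n α-information matrix G^{(α)}(θ) is positive definite. Then for every A : X → ℝ and every θ ∈ Θ, Var_{p_θ^{(α)}}[(p_θ/p_θ^{(α)})(A − E_{p_θ}[A])] ≥ (∇_θ E_{p_θ}[A])^T (G^{(α)}(θ))^{-1} (∇_θ E_{p_θ}[A]). -/
open scoped BigOperators Topology Matrix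
open Real MeasureTheory

noncomputable section

/-- Expectation of `A` under the weight/distribution `p` on a finite set. -/
def expct {X : Type*} [Fintype X] (p A : X → ℝ) : ℝ := ∑ x, p x * A x

/-- Covariance of `A` and `B` under `p`. -/
def covf {X : Type*} [Fintype X] (p A B : X → ℝ) : ℝ :=
  (∑ x, p x * A x * B x) - (∑ x, p x * A x) * (∑ x, p x * B x)

/-- Variance of `A` under `p`: `E_p[(A - E_p A)^2]`. -/
def varE {X : Type*} [Fintype X] (p A : X → ℝ) : ℝ :=
  ∑ x, p x * (A x - expct p A) ^ 2

/-- The α-escort distribution of `p`. -/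
def escort {X : Type*} [Fintype X] (α : ℝ) (p : X → ℝ) : X → ℝ :=
  fun x => p x ^ α / ∑ y, p y ^ α

/-- Partial derivative in the `i`-th coordinate direction. -/
def pderiv {m : ℕ} (i : Fin m) (f : (Fin m → ℝ) → ℝ) (θ : Fin m → ℝ) : ℝ :=
  fderiv ℝ f θ (Pi.single i 1)

/-- Covariance matrix of a vector-valued map `A` under `p`. -/
def covMatrix {X : Type*} [Fintype X] {m : ℕ} (p : X → ℝ) (A : X → Fin m → ℝ) :
    Matrix (Fin m) (Fin m) ℝ :=
  Matrix.of fun i j => covf p (fun x => A x i) (fun x => A x j)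

/-- The α-information matrix `G^{(α)}(θ)`. -/
def Galpha {X : Type*} [Fintype X] {m : ℕ} (α : ℝ) (p : (Fin m → ℝ) → X → ℝ)
    (θ : Fin m → ℝ) : Matrix (Fin m) (Fin m) ℝ :=
  Matrix.of fun i j =>
    covf (escort α (p θ)) (fun x => pderiv i (fun t => Real.log (p t x)) θ)
      (fun x => pderiv j (fun t => Real.log (p t x)) θ)

/-- The I_α-divergence (relative α-entropy). -/
def Ialpha {X : Type*} [Fintype X] (α : ℝ) (p q : X → ℝ) : ℝ :=
  (1 / (1 - α)) * Real.log (∑ x, p x * q x ^ (α - 1))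
    + (1 / α) * Real.log (∑ x, q x ^ α)
    - (1 / (α * (1 - α))) * Real.log (∑ x, p x ^ α)

/-- Generalized KL-divergence between positive measures on a finite set. -/
def genKL {X : Type*} [Fintype X] (pt qt : X → ℝ) : ℝ :=
  ∑ x, pt x * Real.log (pt x / qt x) - ∑ x, pt x + ∑ x, qt x

/-- The Fisher information matrix `G^{(e)}(θ)`. -/
def GeMat {X : Type*} [Fintype X] {k : ℕ} (p : (Fin k → ℝ) → X → ℝ) (θ : Fin k → ℝ) :
    Matrix (Fin k) (Fin k) ℝ :=
  Matrix.of fun i j =>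
    ∑ x, p θ x * pderiv i (fun t => Real.log (p t x)) θ * pderiv j (fun t => Real.log (p t x)) θ

/-- The prior matrix `J^λ(θ)` with entries `∂_i log λ · ∂_j log λ`. -/
def Jmat {k : ℕ} (lam : (Fin k → ℝ) → ℝ) (θ : Fin k → ℝ) : Matrix (Fin k) (Fin k) ℝ :=
  Matrix.of fun i j =>
    pderiv i (fun t => Real.log (lam t)) θ * pderiv j (fun t => Real.log (lam t)) θ

/-- The generalized Fisher matrix `G^{(f,F)}(θ)` of the escort model. -/
def GFF {X : Type*} [Fintype X] {k : ℕ} (F : ℝ → ℝ) (p : (Fin k → ℝ) → X → ℝ)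
    (θ : Fin k → ℝ) : Matrix (Fin k) (Fin k) ℝ :=
  Matrix.of fun i j =>
    ∑ x, F (p θ x) * pderiv i (fun t => Real.log (F (p t x))) θ
      * pderiv j (fun t => Real.log (F (p t x))) θ

/-- The generalized f-divergence `D_f^{(F)}(p,q)`. -/
def genDiv {X : Type*} [Fintype X] (f F : ℝ → ℝ) (p q : X → ℝ) : ℝ :=
  (1 / deriv (deriv f) 1) * ∑ x, F (q x) * f (F (p x) / F (q x))

/-- The Bayesian I_α-divergence between `λ·p` and `μ·q`. -/
def IalphaB {X : Type*} [Fintype X] (α lam mu : ℝ) (p q : X → ℝ) : ℝ :=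
  lam * Ialpha α p q + lam * Real.log (lam / mu) - lam + mu

/-- The open-simplex parametrization of distributions on a set with `d+1` points. -/
def simplexFam (d : ℕ) (θ : Fin d → ℝ) : Fin (d + 1) → ℝ :=
  fun x => if h : (x : ℕ) < d then θ ⟨x, h⟩ else 1 - ∑ i, θ i


/-!
Write `q` for the escort distribution, `s = ∇ log p_θ` for the score and
`B = (p_θ / q) (A - E_{p_θ}[A])`. Then `Cov_q[B, sᵢ] = Cov_{p_θ}[A, sᵢ] = ∂ᵢ E_{p_θ}[A] =: vᵢ`
and `G⁽ᵅ⁾ = Cov_q[s]`. With `u = G⁻¹ v`, the function `T = u ⬝ s` satisfies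
`Cov_q[B, T] = Var_q[T] = vᵀ G⁻¹ v`, so Cauchy–Schwarz `Cov_q[B, T]² ≤ Var_q[B] Var_q[T]`
gives `vᵀ G⁻¹ v ≤ Var_q[B]`.
-/

section FiniteStatistics

variable {X : Type*} [Fintype X]

lemma sum_mul_sub_expct {q : X → ℝ} (hq1 : ∑ x, q x = 1) (B : X → ℝ) :
    ∑ x, q x * (B x - expct q B) = 0 := by
  simp only [mul_sub, Finset.sum_sub_distrib, ← Finset.sum_mul, hq1, expct]
  ring

lemma covf_eq_sum_centered_left (q B T : X → ℝ) :
    covf q B T = ∑ x, q x * (B x - expct q B) * T x := by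
  have h : ∀ x, q x * (B x - expct q B) * T x = q x * B x * T x - expct q B * (q x * T x) :=
    fun x => by ring
  simp only [h]
  rw [Finset.sum_sub_distrib, ← Finset.mul_sum, covf, expct]

lemma covf_eq_sum_centered {q : X → ℝ} (hq1 : ∑ x, q x = 1) (B T : X → ℝ) :
    covf q B T = ∑ x, q x * ((B x - expct q B) * (T x - expct q T)) := by
  have h : ∀ x, q x * ((B x - expct q B) * (T x - expct q T))
      = q x * (B x - expct q B) * T x - expct q T * (q x * (B x - expct q B)) :=
    fun x => by ring
  simp only [h]
  rw [Finset.sum_sub_distrib, ← Finset.mul_sum, sum_mul_sub_expct hq1, mul_zero, sub_zero,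
    covf_eq_sum_centered_left]

lemma covf_self {q : X → ℝ} (hq1 : ∑ x, q x = 1) (B : X → ℝ) : covf q B B = varE q B := by
  rw [covf_eq_sum_centered hq1, varE]
  exact Finset.sum_congr rfl fun x _ => by ring

lemma covf_comm (q B T : X → ℝ) : covf q B T = covf q T B := by
  simp only [covf, mul_right_comm _ (B _), mul_comm (∑ x, q x * B x)]

lemma varE_nonneg {q : X → ℝ} (hq : ∀ x, 0 ≤ q x) (B : X → ℝ) : 0 ≤ varE q B :=
  Finset.sum_nonneg fun x _ => mul_nonneg (hq x) (sq_nonneg _)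

theorem covf_sq_le_varE_mul_varE {q : X → ℝ} (hq : ∀ x, 0 ≤ q x) (hq1 : ∑ x, q x = 1)
    (B T : X → ℝ) : covf q B T ^ 2 ≤ varE q B * varE q T := by
  rw [covf_eq_sum_centered hq1]
  exact Finset.sum_sq_le_sum_mul_sum_of_sq_le_mul _
    (fun x _ => mul_nonneg (hq x) (sq_nonneg _)) (fun x _ => mul_nonneg (hq x) (sq_nonneg _))
    fun x _ => le_of_eq (by ring)

lemma covf_div_mul_sub_expct {p q : X → ℝ} (hq : ∀ x, q x ≠ 0) (hp1 : ∑ x, p x = 1)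
    (A S : X → ℝ) :
    covf q (fun x => p x / q x * (A x - expct p A)) S = covf p A S := by
  have h : ∀ x, q x * (p x / q x * (A x - expct p A)) = p x * (A x - expct p A) :=
    fun x => by field_simp [hq x]
  rw [covf_eq_sum_centered_left p A S]
  simp only [covf, h, sum_mul_sub_expct hp1, zero_mul, sub_zero]

variable {m : ℕ}

lemma covf_dotProduct_right (q B : X → ℝ) (s : X → Fin m → ℝ) (u : Fin m → ℝ) :
    covf q B (fun x => u ⬝ᵥ s x) = u ⬝ᵥ fun i => covf q B (fun x => s x i) := by
  simp only [covf_eq_sum_centered_left, dotProduct, Finset.mul_sum]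
  rw [Finset.sum_comm]
  exact Finset.sum_congr rfl fun i _ => Finset.sum_congr rfl fun x _ => by ring

lemma covf_dotProduct_dotProduct (q : X → ℝ) (s : X → Fin m → ℝ) (u w : Fin m → ℝ) :
    covf q (fun x => u ⬝ᵥ s x) (fun x => w ⬝ᵥ s x) = u ⬝ᵥ covMatrix q s *ᵥ w := by
  have hrow : (fun j => covf q (fun x => u ⬝ᵥ s x) (fun x => s x j)) = u ᵥ* covMatrix q s := by
    ext j
    rw [covf_comm, covf_dotProduct_right]
    simp only [covMatrix, Matrix.vecMul, dotProduct, Matrix.of_apply, covf_comm q (s · j)]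
  rw [covf_dotProduct_right, hrow, Matrix.dotProduct_mulVec, dotProduct_comm]

theorem dotProduct_inv_covMatrix_mulVec_le_varE {q : X → ℝ} (hq : ∀ x, 0 ≤ q x)
    (hq1 : ∑ x, q x = 1) {s : X → Fin m → ℝ} (hG : IsUnit (covMatrix q s)) (B : X → ℝ)
    {v : Fin m → ℝ} (hv : ∀ i, covf q B (fun x => s x i) = v i) :
    v ⬝ᵥ (covMatrix q s)⁻¹ *ᵥ v ≤ varE q B := by
  set r := v ⬝ᵥ (covMatrix q s)⁻¹ *ᵥ v
  set T : X → ℝ := fun x => ((covMatrix q s)⁻¹ *ᵥ v) ⬝ᵥ s x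
  have hBT : covf q B T = r := by
    rw [covf_dotProduct_right, dotProduct_comm]
    simp only [hv]
    rfl
  have hTT : varE q T = r := by
    rw [← covf_self hq1, covf_dotProduct_dotProduct, Matrix.mulVec_mulVec,
      Matrix.mul_nonsing_inv _ ((Matrix.isUnit_iff_isUnit_det _).mp hG), Matrix.one_mulVec,
      dotProduct_comm]
  have hcs := covf_sq_le_varE_mul_varE hq hq1 B T
  rw [hBT, hTT] at hcs
  have hr : 0 ≤ r := hTT ▸ varE_nonneg hq T
  nlinarith [varE_nonneg hq B]

end FiniteStatistics

section Escort

variable {X : Type*} [Fintype X] {p : X → ℝ}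

lemma escort_pos (hp : ∀ x, 0 < p x) (α : ℝ) (x : X) : 0 < escort α p x :=
  div_pos (rpow_pos_of_pos (hp x) α)
    (Finset.sum_pos (fun y _ => rpow_pos_of_pos (hp y) α) ⟨x, Finset.mem_univ x⟩)

lemma sum_escort [Nonempty X] (hp : ∀ x, 0 < p x) (α : ℝ) : ∑ x, escort α p x = 1 := by
  simp only [escort, ← Finset.sum_div]
  exact div_self (Finset.sum_pos (fun y _ => rpow_pos_of_pos (hp y) α) Finset.univ_nonempty).ne'

end Escort

section PartialDerivatives

variable {m : ℕ} {θ : Fin m → ℝ} (i : Fin m)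

lemma pderiv_fun_sum {ι : Type*} {s : Finset ι} {f : ι → (Fin m → ℝ) → ℝ}
    (hf : ∀ x ∈ s, DifferentiableAt ℝ (f x) θ) :
    pderiv i (fun t => ∑ x ∈ s, f x t) θ = ∑ x ∈ s, pderiv i (f x) θ := by
  rw [pderiv, fderiv_fun_sum hf, sum_apply]
  rfl

lemma pderiv_mul_const {f : (Fin m → ℝ) → ℝ} (hf : DifferentiableAt ℝ f θ) (c : ℝ) :
    pderiv i (fun t => f t * c) θ = pderiv i f θ * c := by
  rw [pderiv, fderiv_mul_const hf, smul_apply, smul_eq_mul, mul_comm, pderiv]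

lemma pderiv_eq_zero_of_eventuallyEq_const {f : (Fin m → ℝ) → ℝ} {c : ℝ}
    (hf : f =ᶠ[𝓝 θ] fun _ => c) : pderiv i f θ = 0 := by
  rw [pderiv, hf.fderiv_eq, fderiv_const_apply]
  rfl

lemma mul_pderiv_log {f : (Fin m → ℝ) → ℝ} (hf : DifferentiableAt ℝ f θ) (hf0 : f θ ≠ 0) :
    f θ * pderiv i (fun t => Real.log (f t)) θ = pderiv i f θ := by
  rw [pderiv, (hf.hasFDerivAt.log hf0).fderiv, smul_apply, smul_eq_mul,
    mul_inv_cancel_left₀ hf0, pderiv]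

variable {X : Type*} [Fintype X] {p : (Fin m → ℝ) → X → ℝ}

lemma pderiv_expct (hp : ∀ x, DifferentiableAt ℝ (fun t => p t x) θ) (A : X → ℝ) :
    pderiv i (fun t => expct (p t) A) θ = ∑ x, pderiv i (fun t => p t x) θ * A x := by
  simp only [expct]
  rw [pderiv_fun_sum i fun x _ => (hp x).mul_const (A x)]
  exact Finset.sum_congr rfl fun x _ => pderiv_mul_const i (hp x) (A x)

theorem covf_score_eq_pderiv_expct (hp : ∀ x, DifferentiableAt ℝ (fun t => p t x) θ)
    (hp0 : ∀ x, p θ x ≠ 0) (hp1 : ∀ᶠ t in 𝓝 θ, ∑ x, p t x = 1) (A : X → ℝ) :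
    covf (p θ) A (fun x => pderiv i (fun t => Real.log (p t x)) θ)
      = pderiv i (fun t => expct (p t) A) θ := by
  have hscore x := mul_pderiv_log i (hp x) (hp0 x)
  have hzero : ∑ x, pderiv i (fun t => p t x) θ = 0 := by
    rw [← pderiv_fun_sum i fun x _ => hp x]
    exact pderiv_eq_zero_of_eventuallyEq_const i hp1
  simp only [covf, mul_right_comm (p θ _) (A _), hscore, hzero, mul_zero, sub_zero]
  rw [pderiv_expct i hp]

end PartialDerivatives

theorem variance_ge_norm_differential_general {X : Type*} [Fintype X] {n : ℕ}
    (Θ : Set (Fin n → ℝ)) (hΘ : IsOpen Θ)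
    (p : (Fin n → ℝ) → X → ℝ)
    (hsmooth : ∀ x, ContDiffOn ℝ 1 (fun θ => p θ x) Θ)
    (hpos : ∀ θ ∈ Θ, ∀ x, 0 < p θ x)
    (hsum : ∀ θ ∈ Θ, ∑ x, p θ x = 1)
    (α : ℝ)
    (hG : ∀ θ ∈ Θ, (Galpha α p θ).PosDef) :
    ∀ A : X → ℝ, ∀ θ ∈ Θ,
      varE (escort α (p θ))
          (fun x => (p θ x / escort α (p θ) x) * (A x - expct (p θ) A))
        ≥ (fun i => pderiv i (fun t => expct (p t) A) θ) ⬝ᵥ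
            ((Galpha α p θ)⁻¹).mulVec
              (fun i => pderiv i (fun t => expct (p t) A) θ) := by
  intro A θ hθ
  have hp : ∀ x, 0 < p θ x := hpos θ hθ
  have : Nonempty X := by
    by_contra hX
    simpa [not_nonempty_iff.mp hX] using hsum θ hθ
  have hdiff x : DifferentiableAt ℝ (fun t => p t x) θ :=
    ((hsmooth x).contDiffAt (hΘ.mem_nhds hθ)).differentiableAt one_ne_zero
  have hq := escort_pos hp α
  refine (dotProduct_inv_covMatrix_mulVec_le_varE (fun x => (hq x).le) (sum_escort hp α)
    (s := fun x i => pderiv i (fun t => Real.log (p t x)) θ) (hG θ hθ).isUnit _ fun i => ?_).ge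
  rw [covf_div_mul_sub_expct (fun x => (hq x).ne') (hsum θ hθ),
    covf_score_eq_pderiv_expct i hdiff (fun x => (hp x).ne')
      (Filter.eventually_of_mem (hΘ.mem_nhds hθ) hsum)]

/-- for a submanifold, the variance of the α-representation dominates
the squared norm of the differential of `θ ↦ E_{p_θ}[A]`. -/
theorem variance_ge_norm_differential {X : Type*} [Fintype X] {n : ℕ}
    (Θ : Set (Fin n → ℝ)) (hΘ : IsOpen Θ)
    (p : (Fin n → ℝ) → X → ℝ)
    (hsmooth : ∀ x, ContDiffOn ℝ 1 (fun θ => p θ x) Θ)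
    (hpos : ∀ θ ∈ Θ, ∀ x, 0 < p θ x)
    (hsum : ∀ θ ∈ Θ, ∑ x, p θ x = 1)
    (α : ℝ) (hα : 0 < α)
    (hG : ∀ θ ∈ Θ, (Galpha α p θ).PosDef) :
    ∀ A : X → ℝ, ∀ θ ∈ Θ,
      varE (escort α (p θ))
          (fun x => (p θ x / escort α (p θ) x) * (A x - expct (p θ) A))
        ≥ (fun i => pderiv i (fun t => expct (p t) A) θ) ⬝ᵥ
            ((Galpha α p θ)⁻¹).mulVec
              (fun i => pderiv i (fun t => expct (p t) A) θ) :=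
  variance_ge_norm_differential_general Θ hΘ p hsmooth hpos hsum α hG
end
end

section
/- Let X be a finite set, Θ ⊆ ℝ^m open, and θ ↦ p_θ a twice continuously differentiable family of strictly positive probability distributions on X. Let f : [0,∞) → ℝ be strictly convex and twice continuously differentiable with f(1) = 0 and f''(1) ≠ 0, and let F : (0,∞) → (0,∞) be twice continuously differentiable such that x ↦ F(p_θ(x)) is a strictly positive probability distribution on X for every θ ∈ Θ. Then for all i, j and all θ, −(∂/∂θ'_j)(∂/∂θ_i) D_f^{(F)}(p_θ, p_{θ'}) evaluated at θ' = θ equals ∑_{x∈X} F(p_θ(x)) · ∂_i log F(p_θ(x)) · ∂_j log F(p_θ(x)), i.e. the Eguchi metric of D_f^{(F)} is g^{(f,F)}_{ij}(θ) = E_{F(p_θ)}[∂_i log F(p_θ(X)) ∂_j log F(p_θ(X))]. -/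
open scoped BigOperators Topology Matrix
open Real MeasureTheory

noncomputable section

/-!
Write `q_θ = F ∘ p_θ`, so that `D(θ, θ') = f''(1)⁻¹ ∑ₓ q_θ' f(q_θ / q_θ')`. Differentiating in `θ`
cancels the weight `q_θ'`: `∂ᵢ D = f''(1)⁻¹ ∑ₓ f'(q_θ / q_θ') ∂ᵢ q_θ`. Differentiating this in `θ'`
only hits the argument of `f'`, which equals `1` at `θ' = θ`, so `∂'ⱼ∂ᵢ D = -∑ₓ ∂ᵢ q ∂ⱼ q / q`,
and `∂ log q = ∂q / q` turns this into the claimed form.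
-/

open Filter Topology

section FDivergence

variable {X E : Type*} [Fintype X] [NormedAddCommGroup E] [NormedSpace ℝ E]

def fDiv (f : ℝ → ℝ) (q r : X → ℝ) : ℝ := ∑ x, r x * f (q x / r x)

theorem hasFDerivAt_fDiv_left {f : ℝ → ℝ} {q : E → X → ℝ} {r : X → ℝ} {t : E}
    (hq : ∀ x, DifferentiableAt ℝ (fun s => q s x) t) (hr : ∀ x, r x ≠ 0)
    (hf : ∀ x, DifferentiableAt ℝ f (q t x / r x)) :
    HasFDerivAt (fun s => fDiv f (q s) r)
      (∑ x, deriv f (q t x / r x) • fderiv ℝ (fun s => q s x) t) t := by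
  refine HasFDerivAt.fun_sum fun x _ => ?_
  have hratio : HasDerivAt (fun y => f (y / r x)) (deriv f (q t x / r x) * (1 / r x)) (q t x) :=
    (hf x).hasDerivAt.comp (q t x) ((hasDerivAt_id _).div_const (r x))
  refine ((hratio.comp_hasFDerivAt t (hq x).hasFDerivAt).const_mul (r x)).congr_fderiv ?_
  rw [smul_smul]
  field_simp [hr x]

theorem fderiv_fDiv_left_eventuallyEq {f : ℝ → ℝ} {q : E → X → ℝ} {θ : E} (u : E)
    (hq : ∀ x, DifferentiableAt ℝ (fun s => q s x) θ) (hq0 : ∀ x, q θ x ≠ 0)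
    (hf : ∀ᶠ r in 𝓝 1, DifferentiableAt ℝ f r) :
    (fun θ' => fderiv ℝ (fun t => fDiv f (q t) (q θ')) θ u) =ᶠ[𝓝 θ]
      fun θ' => ∑ x, deriv f (q θ x / q θ' x) * fderiv ℝ (fun s => q s x) θ u := by
  have hratio : ∀ x, Tendsto (fun θ' => q θ x / q θ' x) (𝓝 θ) (𝓝 1) := fun x => by
    simpa [Pi.div_def, hq0 x] using
      (tendsto_const_nhds (x := q θ x)).div (hq x).continuousAt (hq0 x)
  have hnear : ∀ᶠ θ' in 𝓝 θ, ∀ x, q θ' x ≠ 0 ∧ DifferentiableAt ℝ f (q θ x / q θ' x) :=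
    eventually_all.2 fun x =>
      ((hq x).continuousAt.eventually_ne (hq0 x)).and ((hratio x).eventually hf)
  filter_upwards [hnear] with θ' h
  rw [(hasFDerivAt_fDiv_left hq (fun x => (h x).1) (fun x => (h x).2)).fderiv]
  simp only [sum_apply, smul_apply, smul_eq_mul]

theorem hasFDerivAt_sum_deriv_div_right {f : ℝ → ℝ} {q : E → X → ℝ} {θ : E} (c : X → ℝ)
    (hq : ∀ x, DifferentiableAt ℝ (fun s => q s x) θ) (hq0 : ∀ x, q θ x ≠ 0)
    (hf : DifferentiableAt ℝ (deriv f) 1) :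
    HasFDerivAt (fun θ' => ∑ x, deriv f (q θ x / q θ' x) * c x)
      (∑ x, (-deriv (deriv f) 1 * c x / q θ x) • fderiv ℝ (fun s => q s x) θ) θ := by
  refine HasFDerivAt.fun_sum fun x _ => ?_
  have hinv : HasDerivAt (fun y => q θ x / y) (-(q θ x)⁻¹) (q θ x) :=
    ((hasDerivAt_const _ (q θ x)).fun_div (hasDerivAt_id' _) (hq0 x)).congr_deriv (by
      field_simp [hq0 x]; ring)
  have hf' : HasDerivAt (deriv f) (deriv (deriv f) 1) (q θ x / q θ x) := by
    rw [div_self (hq0 x)]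
    exact hf.hasDerivAt
  refine (((hf'.comp _ hinv).comp_hasFDerivAt θ (hq x).hasFDerivAt).mul_const (c x)).congr_fderiv
    ?_
  rw [smul_smul]
  congr 1
  field_simp [hq0 x]

theorem fderiv_fderiv_fDiv_diag {f : ℝ → ℝ} {q : E → X → ℝ} {θ : E} (u v : E)
    (hq : ∀ x, DifferentiableAt ℝ (fun s => q s x) θ) (hq0 : ∀ x, q θ x ≠ 0)
    (hf : ∀ᶠ r in 𝓝 1, DifferentiableAt ℝ f r) (hf' : DifferentiableAt ℝ (deriv f) 1) :
    fderiv ℝ (fun θ' => fderiv ℝ (fun t => fDiv f (q t) (q θ')) θ u) θ v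
      = -deriv (deriv f) 1 *
          ∑ x, fderiv ℝ (fun s => q s x) θ u * fderiv ℝ (fun s => q s x) θ v / q θ x := by
  rw [(fderiv_fDiv_left_eventuallyEq u hq hq0 hf).fderiv_eq,
    (hasFDerivAt_sum_deriv_div_right _ hq hq0 hf').fderiv, Finset.mul_sum]
  simp only [sum_apply, smul_apply, smul_eq_mul]
  refine Finset.sum_congr rfl fun x _ => ?_
  ring

end FDivergence

theorem genDiv_eq_mul_fDiv {X : Type*} [Fintype X] (f F : ℝ → ℝ) (p q : X → ℝ) :
    genDiv f F p q = 1 / deriv (deriv f) 1 * fDiv f (fun x => F (p x)) (fun x => F (q x)) :=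
  rfl

theorem pderiv_const_mul {m : ℕ} (k : Fin m) (c : ℝ) (g : (Fin m → ℝ) → ℝ) (θ : Fin m → ℝ) :
    pderiv k (fun t => c * g t) θ = c * pderiv k g θ := by
  change fderiv ℝ (c • g) θ _ = _
  rw [fderiv_const_smul_field]
  rfl

theorem pderiv_log {m : ℕ} {k : Fin m} {g : (Fin m → ℝ) → ℝ} {θ : Fin m → ℝ}
    (hg : DifferentiableAt ℝ g θ) (hg0 : g θ ≠ 0) :
    pderiv k (fun t => Real.log (g t)) θ = pderiv k g θ / g θ := by
  simp only [pderiv, (hg.hasFDerivAt.log hg0).fderiv, smul_apply, smul_eq_mul]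
  ring

theorem eguchi_metric_genDiv_general {X : Type*} [Fintype X] {m : ℕ}
    (Θ : Set (Fin m → ℝ)) (hΘ : IsOpen Θ)
    (p : (Fin m → ℝ) → X → ℝ)
    (hsmooth : ∀ x, ContDiffOn ℝ 2 (fun θ => p θ x) Θ)
    (hpos : ∀ θ ∈ Θ, ∀ x, 0 < p θ x)
    (f : ℝ → ℝ)
    (hf : ContDiffOn ℝ 2 f (Set.Ici 0))
    (hf'' : deriv (deriv f) 1 ≠ 0)
    (F : ℝ → ℝ) (hF : ContDiffOn ℝ 2 F (Set.Ioi 0))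
    (hFpos : ∀ θ ∈ Θ, ∀ x, 0 < F (p θ x)) :
    ∀ θ ∈ Θ, ∀ i j : Fin m,
      -(pderiv j (fun θ' => pderiv i (fun t => genDiv f F (p t) (p θ')) θ) θ)
        = ∑ x, F (p θ x) * pderiv i (fun t => Real.log (F (p t x))) θ
            * pderiv j (fun t => Real.log (F (p t x))) θ := by
  intro θ hθ i j
  have hFp : ∀ x, DifferentiableAt ℝ (fun t => F (p t x)) θ := fun x =>
    ((hF.contDiffAt (Ioi_mem_nhds (hpos θ hθ x))).differentiableAt two_ne_zero).comp θ
      (((hsmooth x).contDiffAt (hΘ.mem_nhds hθ)).differentiableAt two_ne_zero)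
  have hFp0 : ∀ x, F (p θ x) ≠ 0 := fun x => (hFpos θ hθ x).ne'
  have hfd : ∀ᶠ r in 𝓝 1, DifferentiableAt ℝ f r := by
    filter_upwards [Ioi_mem_nhds one_pos] with r hr
    exact (hf.contDiffAt (Ici_mem_nhds hr)).differentiableAt two_ne_zero
  have hf'd : DifferentiableAt ℝ (deriv f) 1 :=
    ((hf.contDiffAt (Ici_mem_nhds one_pos)).derivWithin (m := 1) (by norm_num)).differentiableAt
      one_ne_zero
  simp only [pderiv_log (hFp _) (hFp0 _), genDiv_eq_mul_fDiv, pderiv_const_mul]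
  unfold pderiv
  rw [fderiv_fderiv_fDiv_diag _ _ hFp hFp0 hfd hf'd, Finset.mul_sum, Finset.mul_sum,
    ← Finset.sum_neg_distrib]
  refine Finset.sum_congr rfl fun x _ => ?_
  field_simp [hFp0 x, hf'']

/-- the Eguchi metric of the generalized f-divergence `D_f^{(F)}`. -/
theorem eguchi_metric_genDiv {X : Type*} [Fintype X] {m : ℕ}
    (Θ : Set (Fin m → ℝ)) (hΘ : IsOpen Θ)
    (p : (Fin m → ℝ) → X → ℝ)
    (hsmooth : ∀ x, ContDiffOn ℝ 2 (fun θ => p θ x) Θ)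
    (hpos : ∀ θ ∈ Θ, ∀ x, 0 < p θ x)
    (hsum : ∀ θ ∈ Θ, ∑ x, p θ x = 1)
    (f : ℝ → ℝ) (hconv : StrictConvexOn ℝ (Set.Ici 0) f)
    (hf : ContDiffOn ℝ 2 f (Set.Ici 0))
    (hf1 : f 1 = 0) (hf'' : deriv (deriv f) 1 ≠ 0)
    (F : ℝ → ℝ) (hF : ContDiffOn ℝ 2 F (Set.Ioi 0))
    (hFpos : ∀ θ ∈ Θ, ∀ x, 0 < F (p θ x))
    (hFsum : ∀ θ ∈ Θ, ∑ x, F (p θ x) = 1) :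
    ∀ θ ∈ Θ, ∀ i j : Fin m,
      -(pderiv j (fun θ' => pderiv i (fun t => genDiv f F (p t) (p θ')) θ) θ)
        = ∑ x, F (p θ x) * pderiv i (fun t => Real.log (F (p t x))) θ
            * pderiv j (fun t => Real.log (F (p t x))) θ :=
  eguchi_metric_genDiv_general Θ hΘ p hsmooth hpos f hf hf'' F hF hFpos
end
end

section
/- Let X be a finite set, Θ ⊆ ℝ^k open, θ ↦ p_θ a twice continuously differentiable family of strictly positive probability distributions on X, and λ : Θ → (0,∞) twice continuously differentiable. Fix α > 0, α ≠ 1, and set p̃_θ := λ(θ) p_θ with Bayesian I_α-divergence I_α(p̃_θ, p̃_{θ'}) := λ(θ) I_α(p_θ, p_{θ'}) + λ(θ) log(λ(θ)/λ(θ')) − λ(θ) + λ(θ'). Then for all i, j and all θ ∈ Θ, −(∂/∂θ'_j)(∂/∂θ_i) I_α(p̃_θ, p̃_{θ'}) evaluated at θ' = θ equals λ(θ) [ Cov_{p_θ^{(α)}}[∂_i log p_θ(X), ∂_j log p_θ(X)] + ∂_i log λ(θ) · ∂_j log λ(θ) ]. -/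
open scoped BigOperators Topology Matrix
open Real MeasureTheory

noncomputable section

/-! Differentiating the Bayesian divergence `λ(θ) I_α(p_θ, p_θ') + λ(θ) log (λ(θ)/λ(θ')) - λ(θ) + λ(θ')`
in `θ` gives `∂_iλ · (I_α(p_θ, p_θ') + log (λ(θ)/λ(θ'))) + λ(θ) ∂_i I_α(p_θ, p_θ')`. In the second
variable at `θ' = θ`, `I_α(p_θ, ·)` is stationary at `p_θ` and the logarithm contributes
`-∂_iλ ∂_jλ / λ`. The only part of `∂_i I_α(p_θ, p_θ')` depending on `θ'` is `1/(1-α)` times the mean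
of `∂_i log p_θ` under the distribution proportional to `p_θ p_θ'^(α-1)`; its `θ'`-derivative is
`α - 1` times a covariance under that distribution, which at `θ' = θ` is the α-escort of `p_θ`. -/

section Escort

variable {X : Type*} [Fintype X]

lemma covf_escort_div_self (α : ℝ) {p : X → ℝ} (hp : ∀ x, 0 < p x) (a b : X → ℝ) :
    covf (escort α p) (fun x => a x / p x) (fun x => b x / p x)
      = (∑ x, p x ^ α)⁻¹ * ∑ x, p x ^ (α - 2) * a x * b x
        - (∑ x, p x ^ (α - 1) * a x) / (∑ x, p x ^ α) ^ 2 * ∑ x, p x ^ (α - 1) * b x := by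
  have hpow : ∀ x, p x ^ (α - 2) = p x ^ α / p x ^ 2 := fun x => by
    exact_mod_cast Real.rpow_sub_natCast (hp x).ne' α 2
  have hmean : ∀ c : X → ℝ, ∑ x, escort α p x * (c x / p x)
      = (∑ x, p x ^ α)⁻¹ * ∑ x, p x ^ (α - 1) * c x := fun c => by
    simp only [escort, Real.rpow_sub_one (hp _).ne', Finset.mul_sum]
    exact Finset.sum_congr rfl fun x _ => by ring
  have hmoment : ∑ x, escort α p x * (a x / p x) * (b x / p x)
      = (∑ x, p x ^ α)⁻¹ * ∑ x, p x ^ (α - 2) * a x * b x := by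
    simp only [escort, hpow, Finset.mul_sum]
    exact Finset.sum_congr rfl fun x _ => by ring
  rw [covf, hmoment, hmean, hmean]
  ring

lemma sum_rpow_pos [Nonempty X] {p : X → ℝ} (hp : ∀ x, 0 < p x) (β : ℝ) : 0 < ∑ x, p x ^ β :=
  Finset.sum_pos (fun x _ => Real.rpow_pos_of_pos (hp x) β) Finset.univ_nonempty

lemma sum_mul_rpow_sub_one {p : X → ℝ} (hp : ∀ x, 0 < p x) (α : ℝ) :
    ∑ x, p x * p x ^ (α - 1) = ∑ x, p x ^ α :=
  Finset.sum_congr rfl fun x _ => by rw [Real.rpow_sub_one (hp x).ne']; field_simp [(hp x).ne']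

end Escort

section Derivatives

variable {E : Type*} [NormedAddCommGroup E] [NormedSpace ℝ E] {X : Type*} [Fintype X]
  {p : E → X → ℝ} {Dp : X → E →L[ℝ] ℝ} {θ : E}

lemma hasFDerivAt_sum_rpow (hp : ∀ x, HasFDerivAt (fun t => p t x) (Dp x) θ)
    (hp0 : ∀ x, 0 < p θ x) (β : ℝ) :
    HasFDerivAt (fun t => ∑ x, p t x ^ β) (∑ x, (β * p θ x ^ (β - 1)) • Dp x) θ :=
  HasFDerivAt.fun_sum fun x _ => (hp x).rpow_const (Or.inl (hp0 x).ne')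

lemma hasFDerivAt_sum_mul_rpow_sub_one (hp : ∀ x, HasFDerivAt (fun t => p t x) (Dp x) θ)
    (hp0 : ∀ x, 0 < p θ x) (α : ℝ) :
    HasFDerivAt (fun t => ∑ x, p θ x * p t x ^ (α - 1))
      ((α - 1) • ∑ x, p θ x ^ (α - 1) • Dp x) θ := by
  refine (HasFDerivAt.fun_sum fun x _ =>
    ((hp x).rpow_const (Or.inl (hp0 x).ne')).const_mul (p θ x)).congr_fderiv ?_
  ext v
  simp only [sum_apply, smul_apply, smul_eq_mul, Finset.mul_sum]
  refine Finset.sum_congr rfl fun x _ => ?_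
  rw [Real.rpow_sub_one (hp0 x).ne' (α - 1)]
  field_simp [(hp0 x).ne']

lemma hasFDerivAt_Ialpha_left [Nonempty X] (α : ℝ) (hp : ∀ x, HasFDerivAt (fun t => p t x) (Dp x) θ)
    (hp0 : ∀ x, 0 < p θ x) {q : X → ℝ} (hq : ∀ x, 0 < q x) :
    HasFDerivAt (fun t => Ialpha α (p t) q)
      ((1 / (1 - α)) • (∑ x, p θ x * q x ^ (α - 1))⁻¹ • ∑ x, q x ^ (α - 1) • Dp x
        - (1 / (α * (1 - α))) • (∑ x, p θ x ^ α)⁻¹ • ∑ x, (α * p θ x ^ (α - 1)) • Dp x) θ := by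
  have hcross : HasFDerivAt (fun t => ∑ x, p t x * q x ^ (α - 1)) (∑ x, q x ^ (α - 1) • Dp x) θ :=
    HasFDerivAt.fun_sum fun x _ => (hp x).mul_const _
  have hcross0 : 0 < ∑ x, p θ x * q x ^ (α - 1) :=
    Finset.sum_pos (fun x _ => mul_pos (hp0 x) (Real.rpow_pos_of_pos (hq x) _)) Finset.univ_nonempty
  exact (((hcross.log hcross0.ne').const_mul _).add_const _).sub
    (((hasFDerivAt_sum_rpow hp hp0 α).log (sum_rpow_pos hp0 α).ne').const_mul _)

lemma hasFDerivAt_IalphaB_left (α : ℝ) {lam : E → ℝ} {Dl : E →L[ℝ] ℝ} (hl : HasFDerivAt lam Dl θ)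
    (hl0 : 0 < lam θ) {μ : ℝ} (hμ : 0 < μ) {q : X → ℝ} {DI : E →L[ℝ] ℝ}
    (hI : HasFDerivAt (fun t => Ialpha α (p t) q) DI θ) :
    HasFDerivAt (fun t => IalphaB α (lam t) μ (p t) q)
      ((Ialpha α (p θ) q + Real.log (lam θ / μ)) • Dl + lam θ • DI) θ := by
  have hlog : HasFDerivAt (fun t => Real.log (lam t / μ)) ((lam θ / μ)⁻¹ • μ⁻¹ • Dl) θ := by
    simpa only [div_eq_mul_inv, smul_smul] using (hl.mul_const μ⁻¹).log (by positivity)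
  unfold IalphaB
  refine ((((hl.fun_mul hI).fun_add (hl.fun_mul hlog)).fun_sub hl).add_const μ).congr_fderiv ?_
  ext v
  simp only [inv_div, sub_apply, add_apply, smul_apply, smul_eq_mul]
  field_simp
  ring

lemma hasFDerivAt_Ialpha_right_self [Nonempty X] {α : ℝ} (hα0 : α ≠ 0) (hα1 : α ≠ 1)
    (hp : ∀ x, HasFDerivAt (fun t => p t x) (Dp x) θ) (hp0 : ∀ x, 0 < p θ x) :
    HasFDerivAt (fun t => Ialpha α (p θ) (p t)) (0 : E →L[ℝ] ℝ) θ := by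
  have hpow0 := sum_rpow_pos hp0 α
  have hcross0 : ∑ x, p θ x * p θ x ^ (α - 1) ≠ 0 := sum_mul_rpow_sub_one hp0 α ▸ hpow0.ne'
  refine (((((hasFDerivAt_sum_mul_rpow_sub_one hp hp0 α).log hcross0).const_mul (1 / (1 - α))).add
    (((hasFDerivAt_sum_rpow hp hp0 α).log hpow0.ne').const_mul (1 / α))).sub_const _).congr_fderiv ?_
  ext v
  have h1α : 1 - α ≠ 0 := sub_ne_zero.2 (Ne.symm hα1)
  simp only [one_div, add_apply, smul_apply, sum_apply, smul_eq_mul, zero_apply]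
  rw [sum_mul_rpow_sub_one hp0]
  simp only [mul_assoc α, ← Finset.mul_sum]
  field_simp
  ring

/-- The mean of `a / p θ` under the distribution proportional to `p θ · (p t)^(α-1)`, which at
`t = θ` is the α-escort of `p θ`. -/
lemma hasFDerivAt_tilted_mean [Nonempty X] (α : ℝ)
    (hp : ∀ x, HasFDerivAt (fun t => p t x) (Dp x) θ) (hp0 : ∀ x, 0 < p θ x) (a : X → ℝ) :
    HasFDerivAt (fun t => (∑ x, p θ x * p t x ^ (α - 1))⁻¹ * ∑ x, p t x ^ (α - 1) * a x)
      ((α - 1) • ((∑ x, p θ x ^ α)⁻¹ • ∑ x, (p θ x ^ (α - 2) * a x) • Dp x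
        - ((∑ x, p θ x ^ (α - 1) * a x) / (∑ x, p θ x ^ α) ^ 2)
          • ∑ x, p θ x ^ (α - 1) • Dp x)) θ := by
  have hcross0 : ∑ x, p θ x * p θ x ^ (α - 1) ≠ 0 :=
    sum_mul_rpow_sub_one hp0 α ▸ (sum_rpow_pos hp0 α).ne'
  have hnum : HasFDerivAt (fun t => ∑ x, p t x ^ (α - 1) * a x)
      (∑ x, a x • ((α - 1) * p θ x ^ (α - 1 - 1)) • Dp x) θ :=
    HasFDerivAt.fun_sum fun x _ => ((hp x).rpow_const (Or.inl (hp0 x).ne')).mul_const (a x)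
  have hinv := (hasDerivAt_inv hcross0).comp_hasFDerivAt θ
    (hasFDerivAt_sum_mul_rpow_sub_one hp hp0 α)
  refine (hinv.fun_mul hnum).congr_fderiv ?_
  have hnum_apply : ∀ v, ∑ x, a x * ((α - 1) * p θ x ^ (α - 1 - 1) * Dp x v)
      = (α - 1) * ∑ x, p θ x ^ (α - 2) * a x * Dp x v := fun v => by
    rw [Finset.mul_sum, show α - 1 - 1 = α - 2 by ring]
    exact Finset.sum_congr rfl fun x _ => by ring
  ext v
  simp only [Function.comp_apply, neg_smul, smul_neg, add_apply, smul_apply, sum_apply, smul_eq_mul,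
    neg_apply, sub_apply]
  rw [sum_mul_rpow_sub_one hp0, hnum_apply]
  ring

lemma fderiv_fderiv_IalphaB_self [Nonempty X] {α : ℝ} (hα0 : α ≠ 0) (hα1 : α ≠ 1)
    (hp : ∀ x, HasFDerivAt (fun t => p t x) (Dp x) θ) (hp0 : ∀ x, 0 < p θ x)
    {lam : E → ℝ} {Dl : E →L[ℝ] ℝ} (hl : HasFDerivAt lam Dl θ) (hl0 : 0 < lam θ) (v w : E) :
    fderiv ℝ (fun θ' => fderiv ℝ (fun t => IalphaB α (lam t) (lam θ') (p t) (p θ')) θ v) θ w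
      = -(lam θ * covf (escort α (p θ)) (fun x => Dp x v / p θ x) (fun x => Dp x w / p θ x)
          + Dl v * Dl w / lam θ) := by
  have hnear : ∀ᶠ θ' in 𝓝 θ, (∀ x, 0 < p θ' x) ∧ 0 < lam θ' :=
    (Filter.eventually_all.2 fun x => continuousAt_const.eventually_lt (hp x).continuousAt (hp0 x)).and
      (continuousAt_const.eventually_lt hl.continuousAt hl0)
  set C := (α * (1 - α))⁻¹ * ((∑ x, p θ x ^ α)⁻¹ * ∑ x, α * p θ x ^ (α - 1) * Dp x v)
  have hinner : (fun θ' => fderiv ℝ (fun t => IalphaB α (lam t) (lam θ') (p t) (p θ')) θ v)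
      =ᶠ[𝓝 θ] fun θ' => (Ialpha α (p θ) (p θ') + (Real.log (lam θ) - Real.log (lam θ'))) * Dl v
        + lam θ * ((1 - α)⁻¹ * ((∑ x, p θ x * p θ' x ^ (α - 1))⁻¹ * ∑ x, p θ' x ^ (α - 1) * Dp x v)
          - C) := by
    filter_upwards [hnear] with θ' ⟨hq, hμ⟩
    rw [(hasFDerivAt_IalphaB_left α hl hl0 hμ (hasFDerivAt_Ialpha_left α hp hp0 hq)).fderiv,
      Real.log_div hl0.ne' hμ.ne']
    simp only [add_apply, sub_apply, smul_apply, sum_apply, smul_eq_mul, C]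
    ring
  have houter := (((hasFDerivAt_Ialpha_right_self hα0 hα1 hp hp0).fun_add
    ((hasFDerivAt_const (Real.log (lam θ)) θ).fun_sub (hl.log hl0.ne'))).mul_const (Dl v)).fun_add
    ((((hasFDerivAt_tilted_mean α hp hp0 fun x => Dp x v).const_mul (1 - α)⁻¹).sub_const
      C).const_mul (lam θ))
  rw [hinner.fderiv_eq, houter.fderiv, covf_escort_div_self α hp0]
  have h1α : 1 - α ≠ 0 := sub_ne_zero.2 (Ne.symm hα1)
  simp only [zero_sub, zero_add, smul_neg, add_apply, neg_apply, smul_apply, smul_eq_mul, sub_apply,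
    sum_apply, neg_add_rev]
  field_simp
  ring

end Derivatives

/-- the Eguchi metric of the Bayesian I_α-divergence is
`λ(θ)[G^{(α)}(θ) + J^λ(θ)]`. -/
theorem eguchi_metric_bayesian_Ialpha {X : Type*} [Fintype X] {k : ℕ}
    (Θ : Set (Fin k → ℝ)) (hΘ : IsOpen Θ)
    (p : (Fin k → ℝ) → X → ℝ)
    (hsmooth : ∀ x, ContDiffOn ℝ 2 (fun θ => p θ x) Θ)
    (hpos : ∀ θ ∈ Θ, ∀ x, 0 < p θ x)
    (hsum : ∀ θ ∈ Θ, ∑ x, p θ x = 1)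
    (lam : (Fin k → ℝ) → ℝ) (hlams : ContDiffOn ℝ 2 lam Θ)
    (hlampos : ∀ θ ∈ Θ, 0 < lam θ)
    (α : ℝ) (hα : 0 < α) (hα1 : α ≠ 1) :
    ∀ θ ∈ Θ, ∀ i j : Fin k,
      -(pderiv j (fun θ' => pderiv i (fun t =>
            lam t * Ialpha α (p t) (p θ')
              + lam t * Real.log (lam t / lam θ') - lam t + lam θ') θ) θ)
        = lam θ *
            (covf (escort α (p θ)) (fun x => pderiv i (fun t => Real.log (p t x)) θ)
                (fun x => pderiv j (fun t => Real.log (p t x)) θ)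
              + pderiv i (fun t => Real.log (lam t)) θ
                * pderiv j (fun t => Real.log (lam t)) θ) := by
  intro θ hθ i j
  obtain ⟨x₀, -, -⟩ := Finset.exists_ne_zero_of_sum_ne_zero ((hsum θ hθ).symm ▸ one_ne_zero)
  have : Nonempty X := ⟨x₀⟩
  have hdiff {f : (Fin k → ℝ) → ℝ} (hf : ContDiffOn ℝ 2 f Θ) : HasFDerivAt f (fderiv ℝ f θ) θ :=
    ((hf.contDiffAt (hΘ.mem_nhds hθ)).differentiableAt (by norm_num)).hasFDerivAt
  have hp x := hdiff (hsmooth x)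
  have hl := hdiff hlams
  have hlogp x := ((hp x).log (hpos θ hθ x).ne').fderiv
  have hloglam := (hl.log (hlampos θ hθ).ne').fderiv
  have hmixed := fderiv_fderiv_IalphaB_self hα.ne' hα1 hp (hpos θ hθ) hl (hlampos θ hθ)
    (Pi.single i 1) (Pi.single j 1)
  unfold IalphaB at hmixed
  simp only [pderiv, hmixed, hlogp, hloglam, smul_apply, smul_eq_mul, inv_mul_eq_div]
  rw [neg_neg, mul_add]
  congr 1
  field_simp [(hlampos θ hθ).ne']
end
end
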